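/- The triple integral ∫∫∫_{[0,∞)³} min(x, y, z)·e^{-(x²+y²+z²)/2} dx dy dz equals 6·(arctan(1) − (1/√2)·arctan(√2)). -/

import Mathlib

/-!
Write `g(t) = exp (-t²/2)` (`gauss`) and `G(x) = ∫_x^∞ g` (`gaussTail`). The innermost
integral is `g(x) g(y) C(min x y)` with `C(m) = ∫_0^∞ min(m, z) g(z) dz = 1 - g(m) + m G(m)`
(`minMoment`), and splitting the next one at `y = x` gives `g(x) B(x)`, where `B = A + C G`
(`minMoment₂`) and `A(x) = ∫_0^x C g` (`minMomentIntegral`). The outer integrand `g B`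
plus `6 g² G` has the antiderivative `-G A - G² - 2 g G²`, which vanishes at infinity and
equals `-3 G(0)² = -3π/2` at `0`. Finally `∫_0^∞ g² G = arctan √2 / √2`: substituting
`t = x u` in `G(x)` and integrating in `x` first leaves `∫_1^∞ du / (2 + u²)`.
-/

open MeasureTheory Real Set Filter Topology

theorem integral_Ioi_mul_exp_neg_mul_sq {b : ℝ} (hb : 0 < b) :
    ∫ x in Ioi (0:ℝ), x * exp (-b * x ^ 2) = (2 * b)⁻¹ := by
  have h := integral_mul_cexp_neg_mul_sq (b := (b : ℂ)) (by simpa using hb)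
  rw [← Complex.ofReal_inj, ← integral_complex_ofReal]
  push_cast
  exact h

theorem integral_Ioi_inv_sq_add_sq {c : ℝ} (hc : 0 < c) (a : ℝ) :
    ∫ u in Ioi a, (c ^ 2 + u ^ 2)⁻¹ = (π / 2 - arctan (a / c)) / c := by
  calc ∫ u in Ioi a, (c ^ 2 + u ^ 2)⁻¹
      = ∫ u in Ioi a, (c ^ 2)⁻¹ * (1 + (c⁻¹ * u) ^ 2)⁻¹ := by
        congr 1 with u
        field_simp
    _ = (c ^ 2)⁻¹ * (c⁻¹⁻¹ * ∫ v in Ioi (c⁻¹ * a), (1 + v ^ 2)⁻¹) := by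
        rw [integral_const_mul, integral_comp_mul_left_Ioi (fun v => (1 + v ^ 2)⁻¹) _
          (inv_pos.2 hc), smul_eq_mul]
    _ = (π / 2 - arctan (a / c)) / c := by
        rw [integral_Ioi_inv_one_add_sq, inv_mul_eq_div]
        field_simp

theorem integral_Ioi_comp_min_mul {f h : ℝ → ℝ} {a m : ℝ} (ham : a ≤ m)
    (hfh : IntegrableOn (fun z => f z * h z) (Ioc a m)) (hh : IntegrableOn h (Ioi m)) :
    ∫ z in Ioi a, f (min m z) * h z = (∫ z in a..m, f z * h z) + f m * ∫ z in Ioi m, h z := by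
  have hleft : EqOn (fun z => f (min m z) * h z) (fun z => f z * h z) (Ioc a m) :=
    fun z hz => by simp [min_eq_right hz.2]
  have hright : EqOn (fun z => f (min m z) * h z) (fun z => f m * h z) (Ioi m) :=
    fun z hz => by simp [min_eq_left (mem_Ioi.1 hz).le]
  rw [← Ioc_union_Ioi_eq_Ioi ham, setIntegral_union Ioc_disjoint_Ioi_same measurableSet_Ioi
      (hfh.congr_fun hleft.symm measurableSet_Ioc)
      (IntegrableOn.congr_fun (hh.const_mul (f m)) hright.symm measurableSet_Ioi),
    setIntegral_congr_fun measurableSet_Ioc hleft, setIntegral_congr_fun measurableSet_Ioi hright,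
    intervalIntegral.integral_of_le ham, integral_const_mul]

theorem integrable_inv_sq_add_sq {c : ℝ} (hc : c ≠ 0) :
    Integrable fun u : ℝ => (c ^ 2 + u ^ 2)⁻¹ := by
  refine ((integrable_inv_one_add_sq.comp_div hc).const_mul (c ^ 2)⁻¹).congr
    (ae_of_all _ fun u => ?_)
  simp only
  field_simp

namespace MinGaussian

noncomputable def gauss (x : ℝ) : ℝ := exp (-x ^ 2 / 2)

noncomputable def gaussTail (x : ℝ) : ℝ := ∫ t in Ioi x, gauss t

lemma gauss_eq_exp_neg_mul_sq (x : ℝ) : gauss x = exp (-(1 / 2) * x ^ 2) := by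
  rw [gauss]; ring_nf

lemma gauss_pos (x : ℝ) : 0 < gauss x := exp_pos _

lemma gauss_le_one (x : ℝ) : gauss x ≤ 1 :=
  exp_le_one_iff.2 (by nlinarith [sq_nonneg x])

lemma gauss_zero : gauss 0 = 1 := by simp [gauss]

@[fun_prop] lemma continuous_gauss : Continuous gauss := by
  unfold gauss; fun_prop

lemma integrable_gauss : Integrable gauss := by
  simpa only [← gauss_eq_exp_neg_mul_sq] using
    integrable_exp_neg_mul_sq (b := 1 / 2) (by norm_num)

lemma integrable_mul_gauss : Integrable fun x => x * gauss x := by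
  simpa only [← gauss_eq_exp_neg_mul_sq] using
    integrable_mul_exp_neg_mul_sq (b := 1 / 2) (by norm_num)

lemma tendsto_gauss_atTop : Tendsto gauss atTop (𝓝 0) := by
  simpa only [Function.comp_def, ← gauss_eq_exp_neg_mul_sq] using tendsto_exp_atBot.comp
    ((tendsto_pow_atTop two_ne_zero).const_mul_atTop_of_neg (by norm_num : -(1 / 2 : ℝ) < 0))

lemma hasDerivAt_gauss (x : ℝ) : HasDerivAt gauss (-x * gauss x) x := by
  have h : HasDerivAt (fun x : ℝ => -x ^ 2 / 2) (-x) x :=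
    ((hasDerivAt_pow 2 x).fun_neg.div_const 2).congr_deriv (by ring)
  exact h.exp.congr_deriv (by rw [gauss]; ring)

lemma integral_Ioi_mul_gauss (a : ℝ) : ∫ s in Ioi a, s * gauss s = gauss a := by
  simpa using integral_Ioi_of_hasDerivAt_of_tendsto'
    (fun x _ => (hasDerivAt_gauss x).neg.congr_deriv (by ring))
    integrable_mul_gauss.integrableOn tendsto_gauss_atTop.neg

lemma integral_mul_gauss (a b : ℝ) : ∫ s in a..b, s * gauss s = gauss a - gauss b := by
  rw [intervalIntegral.integral_eq_sub_of_hasDerivAt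
    (fun x _ => (hasDerivAt_gauss x).neg.congr_deriv (by ring))
    integrable_mul_gauss.intervalIntegrable, Pi.neg_apply, Pi.neg_apply]
  ring

lemma gaussTail_eq_sub (a : ℝ) : gaussTail a = gaussTail 0 - ∫ t in (0:ℝ)..a, gauss t := by
  rw [gaussTail, gaussTail, ← intervalIntegral.integral_interval_add_Ioi (a := 0) (b := a)
    integrable_gauss.integrableOn integrable_gauss.integrableOn]
  ring

lemma hasDerivAt_gaussTail (x : ℝ) : HasDerivAt gaussTail (-gauss x) x := by
  rw [funext gaussTail_eq_sub]
  exact (continuous_gauss.integral_hasStrictDerivAt 0 x).hasDerivAt.const_sub _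

@[fun_prop] lemma continuous_gaussTail : Continuous gaussTail :=
  continuous_iff_continuousAt.2 fun x => (hasDerivAt_gaussTail x).continuousAt

lemma gaussTail_nonneg (x : ℝ) : 0 ≤ gaussTail x :=
  setIntegral_nonneg measurableSet_Ioi fun t _ => (gauss_pos t).le

lemma gaussTail_antitone : Antitone gaussTail := fun _ _ hab =>
  setIntegral_mono_set integrable_gauss.integrableOn (ae_of_all _ fun t => (gauss_pos t).le)
    (Ioi_subset_Ioi hab).eventuallyLE

lemma tendsto_gaussTail_atTop : Tendsto gaussTail atTop (𝓝 0) := by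
  have h : Tendsto (fun a => gaussTail 0 - ∫ t in (0:ℝ)..a, gauss t) atTop
      (𝓝 (gaussTail 0 - gaussTail 0)) :=
    tendsto_const_nhds.sub
      (intervalIntegral_tendsto_integral_Ioi 0 integrable_gauss.integrableOn tendsto_id)
  rwa [sub_self, ← funext gaussTail_eq_sub] at h

lemma gaussTail_zero_sq : gaussTail 0 ^ 2 = π / 2 := by
  rw [gaussTail, funext gauss_eq_exp_neg_mul_sq, integral_gaussian_Ioi, div_pow,
    sq_sqrt (by positivity)]
  ring

lemma mul_gaussTail_le (a : ℝ) : a * gaussTail a ≤ gauss a := by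
  rw [← integral_Ioi_mul_gauss, gaussTail, ← integral_const_mul]
  refine setIntegral_mono_on (integrable_gauss.integrableOn.const_mul a)
    integrable_mul_gauss.integrableOn measurableSet_Ioi fun s hs => ?_
  exact mul_le_mul_of_nonneg_right (le_of_lt hs) (gauss_pos s).le

lemma gaussTail_eq_mul_integral {x : ℝ} (hx : 0 < x) :
    gaussTail x = x * ∫ u in Ioi 1, gauss (x * u) := by
  rw [integral_comp_mul_left_Ioi gauss 1 hx, smul_eq_mul, mul_one, gaussTail,
    mul_inv_cancel_left₀ hx.ne']

noncomputable def minMoment (m : ℝ) : ℝ := 1 - gauss m + m * gaussTail m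

noncomputable def minMomentIntegral (x : ℝ) : ℝ := ∫ t in (0:ℝ)..x, minMoment t * gauss t

lemma integral_min_mul_gauss {m : ℝ} (hm : 0 ≤ m) :
    ∫ z in Ioi 0, min m z * gauss z = minMoment m := by
  have h := integral_Ioi_comp_min_mul (f := id) hm
    (continuous_id.mul continuous_gauss).integrableOn_Ioc integrable_gauss.integrableOn
  simp only [id] at h
  rw [h, integral_mul_gauss, gauss_zero, minMoment, gaussTail]

@[fun_prop] lemma continuous_minMoment : Continuous minMoment := by
  unfold minMoment; fun_prop

lemma minMoment_nonneg {x : ℝ} (hx : 0 ≤ x) : 0 ≤ minMoment x := by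
  have := mul_nonneg hx (gaussTail_nonneg x)
  have := gauss_le_one x
  unfold minMoment; linarith

lemma minMoment_le_one (x : ℝ) : minMoment x ≤ 1 := by
  have := mul_gaussTail_le x
  unfold minMoment; linarith

lemma hasDerivAt_minMomentIntegral (x : ℝ) :
    HasDerivAt minMomentIntegral (minMoment x * gauss x) x :=
  ((continuous_minMoment.mul continuous_gauss).integral_hasStrictDerivAt 0 x).hasDerivAt

@[fun_prop] lemma continuous_minMomentIntegral : Continuous minMomentIntegral :=
  continuous_iff_continuousAt.2 fun x => (hasDerivAt_minMomentIntegral x).continuousAt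

lemma minMomentIntegral_nonneg {x : ℝ} (hx : 0 ≤ x) : 0 ≤ minMomentIntegral x :=
  intervalIntegral.integral_nonneg hx fun t ht =>
    mul_nonneg (minMoment_nonneg ht.1) (gauss_pos t).le

lemma minMomentIntegral_le {x : ℝ} (hx : 0 ≤ x) : minMomentIntegral x ≤ gaussTail 0 := by
  calc minMomentIntegral x ≤ ∫ t in (0:ℝ)..x, gauss t :=
        intervalIntegral.integral_mono_on hx
          ((continuous_minMoment.mul continuous_gauss).intervalIntegrable _ _)
          (continuous_gauss.intervalIntegrable _ _) fun t _ =>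
          mul_le_of_le_one_left (gauss_pos t).le (minMoment_le_one t)
    _ = gaussTail 0 - gaussTail x := by rw [gaussTail_eq_sub x]; ring
    _ ≤ gaussTail 0 := sub_le_self _ (gaussTail_nonneg x)

noncomputable def minMoment₂ (x : ℝ) : ℝ := minMomentIntegral x + minMoment x * gaussTail x

lemma integral_minMoment_min_mul_gauss {x : ℝ} (hx : 0 ≤ x) :
    ∫ y in Ioi 0, minMoment (min x y) * gauss y = minMoment₂ x :=
  integral_Ioi_comp_min_mul hx (continuous_minMoment.mul continuous_gauss).integrableOn_Ioc
    integrable_gauss.integrableOn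

lemma minMoment₂_nonneg {x : ℝ} (hx : 0 ≤ x) : 0 ≤ minMoment₂ x :=
  add_nonneg (minMomentIntegral_nonneg hx) (mul_nonneg (minMoment_nonneg hx) (gaussTail_nonneg x))

lemma minMoment₂_le {x : ℝ} (hx : 0 ≤ x) : minMoment₂ x ≤ 2 * gaussTail 0 := by
  have hCG : minMoment x * gaussTail x ≤ gaussTail 0 :=
    (mul_le_of_le_one_left (gaussTail_nonneg x) (minMoment_le_one x)).trans (gaussTail_antitone hx)
  rw [minMoment₂, two_mul]
  exact add_le_add (minMomentIntegral_le hx) hCG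

@[fun_prop] lemma continuous_minMoment₂ : Continuous minMoment₂ := by
  unfold minMoment₂; fun_prop

lemma integrableOn_gauss_mul_minMoment₂ :
    IntegrableOn (fun x => gauss x * minMoment₂ x) (Ioi 0) :=
  integrable_gauss.integrableOn.mul_bdd (by fun_prop) <|
    (ae_restrict_iff' measurableSet_Ioi).2 <| ae_of_all _ fun x hx => by
      rw [norm_of_nonneg (minMoment₂_nonneg (le_of_lt hx))]
      exact minMoment₂_le (le_of_lt hx)

noncomputable def tailKernel (x u : ℝ) : ℝ := x * exp (-(1 + u ^ 2 / 2) * x ^ 2)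

lemma gauss_sq_mul_gaussTail_eq {x : ℝ} (hx : 0 < x) :
    gauss x ^ 2 * gaussTail x = ∫ u in Ioi 1, tailKernel x u := by
  rw [gaussTail_eq_mul_integral hx, ← mul_assoc, ← integral_const_mul]
  congr 1 with u
  simp only [tailKernel, gauss, ← exp_nat_mul]
  rw [mul_comm (exp _) x, mul_assoc, ← exp_add]
  ring_nf

lemma integral_tailKernel (u : ℝ) : ∫ x in Ioi 0, tailKernel x u = (√2 ^ 2 + u ^ 2)⁻¹ := by
  simp only [tailKernel]
  rw [integral_Ioi_mul_exp_neg_mul_sq (by positivity), sq_sqrt zero_le_two]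
  ring_nf

lemma integrable_uncurry_tailKernel :
    Integrable (Function.uncurry tailKernel)
      ((volume.restrict (Ioi 0)).prod (volume.restrict (Ioi 1))) := by
  rw [integrable_prod_iff' (by unfold tailKernel; fun_prop)]
  refine ⟨ae_of_all _ fun u => ?_, ?_⟩
  · exact (integrable_mul_exp_neg_mul_sq (by positivity : 0 < 1 + u ^ 2 / 2)).integrableOn
  · refine (integrable_inv_sq_add_sq (by positivity : √2 ≠ 0)).integrableOn.congr_fun
      (fun u _ => ?_) measurableSet_Ioi
    simp only [← integral_tailKernel u, Function.uncurry_apply_pair]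
    refine setIntegral_congr_fun measurableSet_Ioi fun x hx => ?_
    exact (norm_of_nonneg (mul_nonneg (le_of_lt hx) (exp_pos _).le)).symm

lemma integrableOn_gauss_sq_mul_gaussTail :
    IntegrableOn (fun x => gauss x ^ 2 * gaussTail x) (Ioi 0) := by
  refine (integrable_gauss.integrableOn.const_mul (gaussTail 0)).mono' (by fun_prop) <|
    (ae_restrict_iff' measurableSet_Ioi).2 <| ae_of_all _ fun x hx => ?_
  rw [norm_of_nonneg (mul_nonneg (sq_nonneg _) (gaussTail_nonneg x)), sq, mul_assoc,
    mul_comm (gaussTail 0)]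
  exact mul_le_mul_of_nonneg_left
    ((mul_le_of_le_one_left (gaussTail_nonneg x) (gauss_le_one x)).trans
      (gaussTail_antitone (le_of_lt hx)))
    (gauss_pos x).le

lemma integral_gauss_sq_mul_gaussTail :
    ∫ x in Ioi 0, gauss x ^ 2 * gaussTail x = arctan (√2) / √2 := by
  rw [setIntegral_congr_fun measurableSet_Ioi fun x hx => gauss_sq_mul_gaussTail_eq hx,
    integral_integral_swap integrable_uncurry_tailKernel]
  simp only [integral_tailKernel]
  rw [integral_Ioi_inv_sq_add_sq (by positivity), one_div, arctan_inv_of_pos (by positivity)]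
  ring

noncomputable def outerPrimitive (x : ℝ) : ℝ :=
  -(gaussTail x * minMomentIntegral x) - gaussTail x ^ 2 - 2 * (gauss x * gaussTail x ^ 2)

lemma hasDerivAt_outerPrimitive (x : ℝ) :
    HasDerivAt outerPrimitive (gauss x * minMoment₂ x + 6 * (gauss x ^ 2 * gaussTail x)) x := by
  have hG := hasDerivAt_gaussTail x
  have h := ((hG.mul (hasDerivAt_minMomentIntegral x)).neg.sub (hG.pow 2)).sub
    (((hasDerivAt_gauss x).mul (hG.pow 2)).const_mul 2)
  refine h.congr_deriv ?_
  rw [minMoment₂, minMoment, Pi.pow_apply]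
  push_cast
  ring

lemma tendsto_outerPrimitive_atTop : Tendsto outerPrimitive atTop (𝓝 0) := by
  have hA : IsBoundedUnder (· ≤ ·) atTop ((‖·‖) ∘ minMomentIntegral) :=
    isBoundedUnder_of_eventually_le (a := gaussTail 0) <|
      (eventually_ge_atTop 0).mono fun x hx => by
        simpa [abs_of_nonneg (minMomentIntegral_nonneg hx)] using minMomentIntegral_le hx
  have h : Tendsto outerPrimitive atTop (𝓝 (-0 - 0 ^ 2 - 2 * (0 * 0 ^ 2))) :=
    ((tendsto_gaussTail_atTop.zero_mul_isBoundedUnder_le hA).neg.sub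
      (tendsto_gaussTail_atTop.pow 2)).sub
      ((tendsto_gauss_atTop.mul (tendsto_gaussTail_atTop.pow 2)).const_mul 2)
  simpa using h

lemma outerPrimitive_zero : outerPrimitive 0 = -(3 * (π / 2)) := by
  rw [outerPrimitive, minMomentIntegral, intervalIntegral.integral_same, gauss_zero,
    ← gaussTail_zero_sq]
  ring

lemma integral_gauss_mul_minMoment₂ :
    ∫ x in Ioi 0, gauss x * minMoment₂ x = 3 * (π / 2) - 6 * (arctan (√2) / √2) := by
  have hint := integrableOn_gauss_sq_mul_gaussTail.const_mul 6
  have h := integral_Ioi_of_hasDerivAt_of_tendsto' (fun x _ => hasDerivAt_outerPrimitive x)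
    (integrableOn_gauss_mul_minMoment₂.add hint) tendsto_outerPrimitive_atTop
  rw [integral_add integrableOn_gauss_mul_minMoment₂ hint, integral_const_mul,
    integral_gauss_sq_mul_gaussTail, outerPrimitive_zero] at h
  linarith

lemma exp_neg_sum_sq_div_two (x y z : ℝ) :
    exp (-(x ^ 2 + y ^ 2 + z ^ 2) / 2) = gauss x * gauss y * gauss z := by
  simp only [gauss, ← exp_add]
  ring_nf

end MinGaussian

open MinGaussian

theorem stmt_2 :
    ∫ x in Set.Ioi (0:ℝ), ∫ y in Set.Ioi (0:ℝ), ∫ z in Set.Ioi (0:ℝ),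
        min x (min y z) * Real.exp (-(x ^ 2 + y ^ 2 + z ^ 2) / 2)
      = 6 * (Real.arctan 1 - (1 / Real.sqrt 2) * Real.arctan (Real.sqrt 2)) := by
  have hz : ∀ x ∈ Ioi (0:ℝ), ∀ y ∈ Ioi (0:ℝ),
      ∫ z in Ioi 0, min x (min y z) * exp (-(x ^ 2 + y ^ 2 + z ^ 2) / 2)
        = gauss x * (minMoment (min x y) * gauss y) := fun x hx y hy => by
    simp_rw [exp_neg_sum_sq_div_two, ← min_assoc,
      show ∀ z, min (min x y) z * (gauss x * gauss y * gauss z)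
        = gauss x * gauss y * (min (min x y) z * gauss z) from fun z => by ring]
    rw [integral_const_mul, integral_min_mul_gauss (le_min (le_of_lt hx) (le_of_lt hy))]
    ring
  have hyz : ∀ x ∈ Ioi (0:ℝ), ∫ y in Ioi 0, ∫ z in Ioi 0,
      min x (min y z) * exp (-(x ^ 2 + y ^ 2 + z ^ 2) / 2) = gauss x * minMoment₂ x :=
    fun x hx => by
    rw [setIntegral_congr_fun measurableSet_Ioi (hz x hx), integral_const_mul,
      integral_minMoment_min_mul_gauss (le_of_lt hx)]
  rw [setIntegral_congr_fun measurableSet_Ioi hyz, integral_gauss_mul_minMoment₂, arctan_one]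
  ring
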